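/- Let (X,μ) be a measure space and let G be a family of measurable complex-valued functions on X. If G is uniformly integrable, then there exists a convex, increasing function ω: ℝ → [0,∞) with ω(t)/t → ∞ as t → ∞ such that sup_{g∈G} ∫_X ω(|g|) dμ < ∞ (indeed, one can arrange sup_{g∈G} ∫_X ω(|g|) dμ ≤ 1). -/

import Mathlib

open MeasureTheory Filter Set
open scoped ENNReal

/-!
Choose thresholds `c n ≥ n` with `sup_i ∫_{|gᵢ| ≥ c n} |gᵢ| ≤ 2^-(n+1)` and put
`ω t = ∑ₙ (t - c n)⁺`. Each summand is convex and increasing, and from `c n` on it has slope 1,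
so `ω t / t → ∞`. Since `(|g| - c n)⁺ ≤ |g| · 1_{|g| ≥ c n}`, monotone convergence gives
`∫ ω(|g|) ≤ ∑ₙ 2^-(n+1) = 1`.
-/

noncomputable def valleePoussinFun (c : ℕ → ℝ) (t : ℝ) : ℝ := ∑' n, max (t - c n) 0

theorem ConvexOn.tsum {ι E : Type*} [AddCommMonoid E] [Module ℝ E] {s : Set E}
    (hs : Convex ℝ s) {f : ι → E → ℝ} (hf : ∀ n, ConvexOn ℝ s (f n))
    (hsum : ∀ x ∈ s, Summable fun n => f n x) :
    ConvexOn ℝ s fun x => ∑' n, f n x := by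
  refine ⟨hs, fun x hx y hy a b ha hb hab => ?_⟩
  have hx' := hsum x hx
  have hy' := hsum y hy
  calc ∑' n, f n (a • x + b • y) ≤ ∑' n, (a * f n x + b * f n y) :=
        (hsum _ (hs hx hy ha hb hab)).tsum_le_tsum (fun n => (hf n).2 hx hy ha hb hab)
          ((hx'.mul_left a).add (hy'.mul_left b))
    _ = a • ∑' n, f n x + b • ∑' n, f n y := by
        rw [(hx'.mul_left a).tsum_add (hy'.mul_left b), tsum_mul_left, tsum_mul_left]; rfl

section valleePoussinFun

variable {c : ℕ → ℝ}

theorem summable_max_sub_zero (hc : Tendsto c atTop atTop) (t : ℝ) :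
    Summable fun n => max (t - c n) 0 := by
  obtain ⟨N, hN⟩ := eventually_atTop.1 (hc.eventually_ge_atTop t)
  refine summable_of_ne_finset_zero (s := Finset.range N) fun n hn => ?_
  simpa using hN n (by simpa using hn)

theorem convexOn_valleePoussinFun (hc : Tendsto c atTop atTop) :
    ConvexOn ℝ univ (valleePoussinFun c) :=
  ConvexOn.tsum convex_univ
    (fun _ => ((convexOn_id convex_univ).sub (concaveOn_const _ convex_univ)).sup
      (convexOn_const _ convex_univ))
    fun t _ => summable_max_sub_zero hc t

theorem monotone_valleePoussinFun (hc : Tendsto c atTop atTop) :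
    Monotone (valleePoussinFun c) := fun _ _ hxy =>
  (summable_max_sub_zero hc _).tsum_le_tsum (fun _ => by gcongr) (summable_max_sub_zero hc _)

theorem valleePoussinFun_nonneg (t : ℝ) : 0 ≤ valleePoussinFun c t :=
  tsum_nonneg fun _ => le_max_right _ _

theorem nat_mul_sub_sum_le_valleePoussinFun (hc : Tendsto c atTop atTop) (N : ℕ) (t : ℝ) :
    N * t - ∑ n ∈ Finset.range N, c n ≤ valleePoussinFun c t :=
  calc (N : ℝ) * t - ∑ n ∈ Finset.range N, c n = ∑ n ∈ Finset.range N, (t - c n) := by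
        simp [Finset.sum_sub_distrib]
    _ ≤ ∑ n ∈ Finset.range N, max (t - c n) 0 := Finset.sum_le_sum fun _ _ => le_max_left _ _
    _ ≤ valleePoussinFun c t :=
        (summable_max_sub_zero hc t).sum_le_tsum _ fun _ _ => le_max_right _ _

theorem tendsto_valleePoussinFun_div_atTop (hc : Tendsto c atTop atTop) :
    Tendsto (fun t => valleePoussinFun c t / t) atTop atTop := by
  refine tendsto_atTop.2 fun C => ?_
  obtain ⟨N, hN⟩ := exists_nat_ge (C + 1)
  set S := ∑ n ∈ Finset.range N, c n
  filter_upwards [eventually_ge_atTop (max |S| 1)] with t ht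
  have hS : S ≤ t := (le_abs_self S).trans ((le_max_left _ _).trans ht)
  have ht1 : 1 ≤ t := (le_max_right _ _).trans ht
  rw [le_div_iff₀ (by linarith)]
  nlinarith [nat_mul_sub_sum_le_valleePoussinFun hc N t]

theorem lintegral_ofReal_valleePoussinFun {X : Type*} [MeasurableSpace X] {μ : Measure X}
    (hc : Tendsto c atTop atTop) {f : X → ℝ} (hf : Measurable f) :
    ∫⁻ x, ENNReal.ofReal (valleePoussinFun c (f x)) ∂μ
      = ∑' n, ∫⁻ x, ENNReal.ofReal (max (f x - c n) 0) ∂μ := by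
  rw [← lintegral_tsum (f := fun n x => ENNReal.ofReal (max (f x - c n) 0)) fun n => by fun_prop]
  exact lintegral_congr fun x =>
    ENNReal.ofReal_tsum_of_nonneg (fun _ => le_max_right _ _) (summable_max_sub_zero hc _)

end valleePoussinFun

theorem lintegral_ofReal_max_sub_le_setLIntegral {X : Type*} [MeasurableSpace X]
    (μ : Measure X) (f : X → ℝ) {c : ℝ} (hc : 0 ≤ c) :
    ∫⁻ x, ENNReal.ofReal (max (f x - c) 0) ∂μ ≤ ∫⁻ x in {x | c ≤ f x}, ENNReal.ofReal (f x) ∂μ := by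
  refine (lintegral_mono fun x => ?_).trans (lintegral_indicator_le _ _)
  by_cases hx : c ≤ f x
  · simp only [indicator_of_mem (show x ∈ {x | c ≤ f x} from hx)]
    exact ENNReal.ofReal_le_ofReal (max_le (by linarith) (hc.trans hx))
  · simp [indicator_of_notMem (show x ∉ {x | c ≤ f x} from hx), (not_le.1 hx).le]

/-- de la Vallée Poussin criterion, necessity: if the family `G` of measurable
complex-valued functions is uniformly integrable
(`sup_{g ∈ G} ∫_{{|g| ≥ t}} |g| dμ → 0` as `t → ∞`), then there is a convex,
increasing `ω : ℝ → [0,∞)` with `ω(t)/t → ∞` and `sup_{g ∈ G} ∫ ω(|g|) dμ ≤ 1`. -/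
theorem exists_convex_omega_of_unifIntegrable
    {X : Type*} [MeasurableSpace X] (μ : Measure X) {ι : Type*} (G : ι → X → ℂ)
    (hGmeas : ∀ i, Measurable (G i))
    (hui : Tendsto
      (fun t : ℝ => ⨆ i, ∫⁻ x in {x | t ≤ ‖G i x‖}, ENNReal.ofReal ‖G i x‖ ∂μ)
      atTop (nhds 0)) :
    ∃ ω : ℝ → ℝ, ConvexOn ℝ Set.univ ω ∧ Monotone ω ∧ (∀ t, 0 ≤ ω t) ∧
      Tendsto (fun t => ω t / t) atTop atTop ∧
      (⨆ i, ∫⁻ x, ENNReal.ofReal (ω ‖G i x‖) ∂μ) ≤ 1 := by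
  have threshold (n : ℕ) : ∃ T : ℝ, (n : ℝ) ≤ T ∧
      (⨆ i, ∫⁻ x in {x | T ≤ ‖G i x‖}, ENNReal.ofReal ‖G i x‖ ∂μ) ≤ 2⁻¹ ^ (n + 1) :=
    ((eventually_ge_atTop (n : ℝ)).and
      (hui.eventually (ge_mem_nhds (ENNReal.pow_pos (by simp) _)))).exists
  choose c hnc hc using threshold
  have hc_top : Tendsto c atTop atTop := tendsto_atTop_mono hnc tendsto_natCast_atTop_atTop
  refine ⟨valleePoussinFun c, convexOn_valleePoussinFun hc_top, monotone_valleePoussinFun hc_top,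
    valleePoussinFun_nonneg, tendsto_valleePoussinFun_div_atTop hc_top, iSup_le fun i => ?_⟩
  rw [lintegral_ofReal_valleePoussinFun hc_top (hGmeas i).norm]
  calc ∑' n, ∫⁻ x, ENNReal.ofReal (max (‖G i x‖ - c n) 0) ∂μ
      ≤ ∑' n : ℕ, (2⁻¹ : ℝ≥0∞) ^ (n + 1) := ENNReal.tsum_le_tsum fun n =>
        (lintegral_ofReal_max_sub_le_setLIntegral μ _ ((Nat.cast_nonneg n).trans (hnc n))).trans
          ((le_iSup_of_le i le_rfl).trans (hc n))
    _ = 1 := by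
      rw [ENNReal.tsum_geometric_add_one, ENNReal.one_sub_inv_two, inv_inv,
        ENNReal.inv_mul_cancel two_ne_zero ENNReal.ofNat_ne_top]
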